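/- The ring T(M,p) together with (ρ_A, ρ_M, ρ_B) is the initial object in the category of (A,M,B)-rings (S, f_A, f_M, f_B) with f_M(p) = 1: for any ring S with ring homomorphisms f_A : A → S, f_B : B → S, and an (A,B)-bimodule map f_M : M → S (bimodule structure on S induced by f_A, f_B) satisfying f_M(p) = 1, there is a unique ring homomorphism θ : T(M,p) → S with θ∘ρ_A = f_A, θ∘ρ_M = f_M, θ∘ρ_B = f_B. -/
import Mathlib

section TringSec

open MulOpposite

variable (A : Type) [Ring A] (B : Type) [Ring B] {M : Type} [AddCommGroup M]
  [Module A M] [Module Bᵐᵒᵖ M]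

/-- The defining relations of the ring `T(M,p)`: it is generated by symbols
`x_m` (`m : M`) subject to `x_m + x_{m'} = x_{m+m'}`, `x_{ap} x_m = x_{am}`,
`x_m x_{pb} = x_{mb}` and `x_p = 1`. -/
inductive TRel (p : M) : FreeRing M → FreeRing M → Prop
  | add (m m' : M) : TRel p (FreeRing.of (m + m')) (FreeRing.of m + FreeRing.of m')
  | left (a : A) (m : M) : TRel p (FreeRing.of (a • p) * FreeRing.of m) (FreeRing.of (a • m))
  | right (m : M) (b : B) :
      TRel p (FreeRing.of m * FreeRing.of (op b • p)) (FreeRing.of (op b • m))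
  | one : TRel p (FreeRing.of p) 1

/-- The ring `T(M,p)`. -/
def Tring (p : M) : Type := RingQuot (TRel A B p)

instance (p : M) : Ring (Tring A B p) := inferInstanceAs (Ring (RingQuot (TRel A B p)))

/-- The generator `x_m` of `T(M,p)`. -/
def tx (p : M) (m : M) : Tring A B p := RingQuot.mkRingHom (TRel A B p) (FreeRing.of m)

end TringSec

open MulOpposite in
/-- `T(M,p)` with `(ρ_A, ρ_M, ρ_B)` is the initial object in the
category of `(A,M,B)`-rings `(S, f_A, f_M, f_B)` with `f_M(p) = 1`: for any ring
`S` with ring morphisms `f_A : A → S`, `f_B : B → S` and an `(A,B)`-bimodule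
morphism `f_M : M → S` (w.r.t. the bimodule structure induced by `f_A, f_B`)
such that `f_M(p) = 1`, there is a unique ring morphism `θ : T(M,p) → S` with
`θ∘ρ_A = f_A`, `θ∘ρ_M = f_M`, `θ∘ρ_B = f_B`. -/
theorem tring_initial (A B M : Type) [Ring A] [Ring B] [AddCommGroup M]
    [Module A M] [Module Bᵐᵒᵖ M] (p : M)
    (S : Type) [Ring S] (fA : A →+* S) (fB : B →+* S) (fM : M →+ S)
    (hA : ∀ (a : A) (m : M), fA a * fM m = fM (a • m))
    (hB : ∀ (m : M) (b : B), fM m * fB b = fM (op b • m))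
    (hp : fM p = 1) :
    ∃! θ : Tring A B p →+* S,
      (∀ a : A, θ (tx A B p (a • p)) = fA a) ∧
      (∀ m : M, θ (tx A B p m) = fM m) ∧
      (∀ b : B, θ (tx A B p (op b • p)) = fB b) := by
  set F : FreeRing M →+* S := FreeRing.lift fM with hF
  have hFof : ∀ m : M, F (FreeRing.of m) = fM m := fun m => FreeRing.lift_of fM m
  have hrel : ∀ ⦃x y : FreeRing M⦄, TRel A B p x y → F x = F y := by
    intro x y h
    induction h with
    | add m m' => simp [hFof, map_add]
    | left a m => rw [map_mul, hFof, hFof, hFof, ← hA a p, hp, mul_one, hA]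
    | right m b => rw [map_mul, hFof, hFof, hFof, ← hB p b, hp, one_mul, hB]
    | one => rw [hFof, hp, map_one]
  have key : ∀ m : M, RingQuot.lift ⟨F, hrel⟩ (tx A B p m) = fM m := by
    intro m
    show RingQuot.lift ⟨F, hrel⟩ (RingQuot.mkRingHom (TRel A B p) (FreeRing.of m)) = fM m
    rw [RingQuot.lift_mkRingHom_apply]
    exact hFof m
  refine ⟨RingQuot.lift ⟨F, hrel⟩, ⟨fun a => ?_, key, fun b => ?_⟩, ?_⟩
  · exact (key (a • p)).trans (by rw [← hA, hp, mul_one])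
  · exact (key (op b • p)).trans (by rw [← hB, hp, one_mul])
  · rintro θ ⟨-, hθM, -⟩
    refine RingQuot.ringQuot_ext _ _ (FreeRing.hom_ext fun m => ?_)
    exact (hθM m).trans (key m).symm
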